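/- arXiv:2206.07250 — 9 statements merged into one kernel-verified Lean document; each statement's English description precedes it below -/
import Mathlib

section
/- Let X ⊂ ℝ^d be a centrally symmetric convex body and let 𝓔 be an origin-centered ellipsoid. Suppose that every origin-centered ellipsoid 𝓔* satisfying (i) X ⊆ 𝓔* and (ii) the aspect ratio of 𝓔* is at most κ(X), also contains 𝓔. Then 𝓔 ⊆ √2 · X. -/
noncomputable section

open scoped Pointwise
open RealInnerProductSpace

/-- `A x`, viewed as a vector in Euclidean space. -/
def mulVecE {d : ℕ} (A : Matrix (Fin d) (Fin d) ℝ) (x : EuclideanSpace ℝ (Fin d)) :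
    EuclideanSpace ℝ (Fin d) :=
  WithLp.toLp 2 (A.mulVec x)

/-- The origin-centered ellipsoid determined by a matrix `A`. -/
def Ellip {d : ℕ} (A : Matrix (Fin d) (Fin d) ℝ) : Set (EuclideanSpace ℝ (Fin d)) :=
  {x | ‖mulVecE A x‖ ≤ 1}

/-- The largest singular value (= Euclidean operator norm) of a matrix. -/
def sMax {d : ℕ} (A : Matrix (Fin d) (Fin d) ℝ) : ℝ :=
  ‖Matrix.toEuclideanCLM (𝕜 := ℝ) A‖

/-- The smallest singular value of a nonsingular matrix. -/
def sMin {d : ℕ} (A : Matrix (Fin d) (Fin d) ℝ) : ℝ :=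
  (sMax A⁻¹)⁻¹

/-- Condition number (= aspect ratio of the ellipsoid `Ellip A`). -/
def condNum {d : ℕ} (A : Matrix (Fin d) (Fin d) ℝ) : ℝ :=
  sMax A / sMin A

/-! Suppose `y ∈ E` but `y ∉ √2 • X`. Separating `y / √2` from `X` gives `v` with
`|⟪v, x⟫| ≤ 1` on `X` and `⟪v, y⟫ > √2`; testing `v` on the inscribed ball gives `‖v‖ r ≤ 1`.
For `κ = R / r`, the ellipsoid `‖v‖² ‖x‖² + (κ² - 1) ⟪v, x⟫² ≤ ‖v‖² R² + κ² - 1` has aspect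
ratio `κ` (its semi-axis along `v` is `κ` times shorter than the others) and contains
`X ⊆ closedBall 0 R ∩ {|⟪v, ·⟫| ≤ 1}`, so by hypothesis it contains `y`. But then
`κ² ⟪v, y⟫² ≤ ‖v‖² ‖y‖² + (κ² - 1) ⟪v, y⟫² ≤ ‖v‖² R² + κ² - 1 ≤ 2κ² - 1`, so `⟪v, y⟫² < 2`. -/

open RealInnerProductSpace

lemma zero_mem_interior_of_eq_neg {F : Type*} [AddCommGroup F] [TopologicalSpace F]
    [IsTopologicalAddGroup F] [Module ℝ F] [ContinuousConstSMul ℝ F] {X : Set F}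
    (hconv : Convex ℝ X) (hint : (interior X).Nonempty) (hsymm : X = -X) :
    (0 : F) ∈ interior X := by
  obtain ⟨u, hu⟩ := hint
  have hneg_subset : -interior X ⊆ X :=
    (Set.neg_subset_neg.2 interior_subset).trans hsymm.symm.subset
  have hu' : -u ∈ interior X :=
    interior_maximal hneg_subset (isOpen_interior (s := X)).neg (Set.neg_mem_neg.2 hu)
  simpa using hconv.interior hu hu' (a := 1 / 2) (b := 1 / 2) (by norm_num)
    (by norm_num) (by norm_num)

lemma pos_of_isGreatest_closedBall_subset {F : Type*} [PseudoMetricSpace F] {X : Set F} {x₀ : F}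
    {r : ℝ} (hx₀ : x₀ ∈ interior X) (hr : IsGreatest {s | Metric.closedBall x₀ s ⊆ X} r) :
    0 < r := by
  obtain ⟨ε, hε, hball⟩ := Metric.nhds_basis_closedBall.mem_iff.1 (mem_interior_iff_mem_nhds.1 hx₀)
  exact hε.trans_le (hr.2 hball)

lemma exists_inner_le_one_lt_of_notMem {F : Type*} [NormedAddCommGroup F]
    [InnerProductSpace ℝ F] [CompleteSpace F] {X : Set F} {z : F} (hconv : Convex ℝ X)
    (hclosed : IsClosed X) (h0 : 0 ∈ X) (hz : z ∉ X) :
    ∃ v : F, (∀ x ∈ X, ⟪v, x⟫ ≤ 1) ∧ 1 < ⟪v, z⟫ := by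
  obtain ⟨f, c, hfX, hfz⟩ := geometric_hahn_banach_closed_point hconv hclosed hz
  have hc : 0 < c := by simpa using hfX 0 h0
  refine ⟨c⁻¹ • (InnerProductSpace.toDual ℝ F).symm f, fun x hx => ?_, ?_⟩
  · rw [real_inner_smul_left, InnerProductSpace.toDual_symm_apply]
    exact (inv_mul_le_one₀ hc).2 (hfX x hx).le
  · rw [real_inner_smul_left, InnerProductSpace.toDual_symm_apply]
    exact (one_lt_inv_mul₀ hc).2 hfz

lemma abs_inner_le_one_of_eq_neg {F : Type*} [NormedAddCommGroup F] [InnerProductSpace ℝ F]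
    {X : Set F} {v : F} (hsymm : X = -X) (hv : ∀ x ∈ X, ⟪v, x⟫ ≤ 1) :
    ∀ x ∈ X, |⟪v, x⟫| ≤ 1 := fun x hx => by
  have hnx : -x ∈ X := by rw [hsymm]; exact Set.neg_mem_neg.2 hx
  have := hv _ hnx
  rw [inner_neg_right] at this
  exact abs_le.2 ⟨by linarith, hv x hx⟩

lemma norm_mul_le_one_of_closedBall_subset {F : Type*} [NormedAddCommGroup F]
    [InnerProductSpace ℝ F] {X : Set F} {v : F} {r : ℝ} (hr : 0 ≤ r)
    (hball : Metric.closedBall 0 r ⊆ X) (hv : ∀ x ∈ X, ⟪v, x⟫ ≤ 1) : ‖v‖ * r ≤ 1 := by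
  rcases eq_or_ne v 0 with rfl | hv0
  · simp
  have hx : (r * ‖v‖⁻¹) • v ∈ X := hball (by
    rw [Metric.mem_closedBall, dist_zero_right, norm_smul, Real.norm_eq_abs,
      abs_of_nonneg (by positivity), inv_mul_cancel_right₀ (norm_ne_zero_iff.2 hv0)])
  have := hv _ hx
  rwa [real_inner_smul_right, real_inner_self_eq_norm_sq, sq, mul_assoc,
    inv_mul_cancel_left₀ (norm_ne_zero_iff.2 hv0), mul_comm] at this

lemma le_of_closedBall_zero_subset_closedBall_zero {F : Type*} [NormedAddCommGroup F]
    [NormedSpace ℝ F] [Nontrivial F] {r R : ℝ} (hr : 0 ≤ r)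
    (h : Metric.closedBall (0 : F) r ⊆ Metric.closedBall 0 R) : r ≤ R := by
  obtain ⟨x, hx⟩ := exists_norm_eq F hr
  simpa [hx] using h (show x ∈ Metric.closedBall 0 r by simp [hx])

section AxialMatrix

variable {d : ℕ}

/-- Scaling by `t` along `u` and by `s` on the orthogonal complement, when `‖u‖ = 1`. -/
def axialMatrix (u : EuclideanSpace ℝ (Fin d)) (s t : ℝ) : Matrix (Fin d) (Fin d) ℝ :=
  s • 1 + (t - s) • Matrix.vecMulVec u u

lemma mulVecE_axialMatrix (u x : EuclideanSpace ℝ (Fin d)) (s t : ℝ) :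
    mulVecE (axialMatrix u s t) x = s • x + ((t - s) * ⟪u, x⟫) • u := by
  ext i
  simp only [axialMatrix, mulVecE, Matrix.add_mulVec, Matrix.smul_mulVec, Matrix.one_mulVec,
    Matrix.vecMulVec_mulVec, op_smul_eq_mul, EuclideanSpace.inner_eq_star_dotProduct,
    star_trivial, PiLp.add_apply, PiLp.smul_apply, Pi.add_apply, Pi.smul_apply, smul_eq_mul,
    dotProduct_comm]
  ring

variable {u : EuclideanSpace ℝ (Fin d)}

lemma norm_mulVecE_axialMatrix_sq (hu : ‖u‖ = 1) (x : EuclideanSpace ℝ (Fin d)) (s t : ℝ) :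
    ‖mulVecE (axialMatrix u s t) x‖ ^ 2 = s ^ 2 * ‖x‖ ^ 2 + (t ^ 2 - s ^ 2) * ⟪u, x⟫ ^ 2 := by
  rw [mulVecE_axialMatrix, norm_add_sq_real, norm_smul, norm_smul, hu, real_inner_smul_left,
    real_inner_smul_right, real_inner_comm, mul_pow, mul_pow, Real.norm_eq_abs, sq_abs,
    Real.norm_eq_abs, sq_abs]
  ring

lemma axialMatrix_mul (hu : ‖u‖ = 1) (s t s' t' : ℝ) :
    axialMatrix u s t * axialMatrix u s' t' = axialMatrix u (s * s') (t * t') := by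
  have hdot : u.ofLp ⬝ᵥ u.ofLp = 1 := by
    have := real_inner_self_eq_norm_sq u
    rwa [hu, one_pow, EuclideanSpace.inner_eq_star_dotProduct, star_trivial] at this
  have hproj : Matrix.vecMulVec u u * Matrix.vecMulVec u u = Matrix.vecMulVec u u := by
    rw [Matrix.vecMulVec_mul_vecMulVec, hdot, one_smul]
  simp only [axialMatrix, add_mul, mul_add, smul_mul_assoc, mul_smul_comm, one_mul, mul_one,
    hproj]
  module

lemma axialMatrix_mul_inv (hu : ‖u‖ = 1) {s t : ℝ} (hs : s ≠ 0) (ht : t ≠ 0) :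
    axialMatrix u s t * axialMatrix u s⁻¹ t⁻¹ = 1 := by
  rw [axialMatrix_mul hu, mul_inv_cancel₀ hs, mul_inv_cancel₀ ht]
  simp [axialMatrix]

lemma det_axialMatrix_ne_zero (hu : ‖u‖ = 1) {s t : ℝ} (hs : s ≠ 0) (ht : t ≠ 0) :
    (axialMatrix u s t).det ≠ 0 :=
  Matrix.det_ne_zero_of_right_inverse (axialMatrix_mul_inv hu hs ht)

lemma inv_axialMatrix (hu : ‖u‖ = 1) {s t : ℝ} (hs : s ≠ 0) (ht : t ≠ 0) :
    (axialMatrix u s t)⁻¹ = axialMatrix u s⁻¹ t⁻¹ :=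
  Matrix.inv_eq_right_inv (axialMatrix_mul_inv hu hs ht)

lemma sMax_axialMatrix_le (hu : ‖u‖ = 1) {s t : ℝ} (hs : 0 ≤ s) (ht : 0 ≤ t) :
    sMax (axialMatrix u s t) ≤ max s t := by
  refine ContinuousLinearMap.opNorm_le_bound _ (hs.trans (le_max_left s t)) fun x => ?_
  have hux : ⟪u, x⟫ ^ 2 ≤ ‖x‖ ^ 2 := by
    simpa [hu] using pow_le_pow_left₀ (abs_nonneg _) (abs_real_inner_le_norm u x) 2
  have hs' : s ^ 2 ≤ max s t ^ 2 := pow_le_pow_left₀ hs (le_max_left s t) 2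
  have ht' : t ^ 2 ≤ max s t ^ 2 := pow_le_pow_left₀ ht (le_max_right s t) 2
  refine le_of_pow_le_pow_left₀ two_ne_zero (by positivity) ?_
  change ‖mulVecE (axialMatrix u s t) x‖ ^ 2 ≤ _
  rw [norm_mulVecE_axialMatrix_sq hu]
  nlinarith [sq_nonneg ⟪u, x⟫]

lemma condNum_axialMatrix_le (hu : ‖u‖ = 1) {s t : ℝ} (hs : 0 < s) (hst : s ≤ t) :
    condNum (axialMatrix u s t) ≤ t / s := by
  have ht : 0 < t := hs.trans_le hst
  have hmax : sMax (axialMatrix u s t) ≤ t := by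
    simpa [max_eq_right hst] using sMax_axialMatrix_le hu hs.le ht.le
  have hmax_inv : sMax (axialMatrix u s⁻¹ t⁻¹) ≤ s⁻¹ := by
    simpa [max_eq_left (inv_anti₀ hs hst)] using
      sMax_axialMatrix_le hu (inv_nonneg.2 hs.le) (inv_nonneg.2 ht.le)
  rw [condNum, sMin, inv_axialMatrix hu hs.ne' ht.ne', div_inv_eq_mul, div_eq_mul_inv]
  exact mul_le_mul hmax hmax_inv (norm_nonneg _) ht.le

end AxialMatrix

lemma exists_ellip_condNum_le_iff {d : ℕ} {v : EuclideanSpace ℝ (Fin d)} (hv : v ≠ 0) {κ D : ℝ}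
    (hκ : 1 ≤ κ) (hD : 0 < D) :
    ∃ B : Matrix (Fin d) (Fin d) ℝ, B.det ≠ 0 ∧ condNum B ≤ κ ∧
      ∀ x, x ∈ Ellip B ↔ ‖v‖ ^ 2 * ‖x‖ ^ 2 + (κ ^ 2 - 1) * ⟪v, x⟫ ^ 2 ≤ D := by
  have hp : 0 < ‖v‖ := norm_pos_iff.2 hv
  have hu : ‖‖v‖⁻¹ • v‖ = 1 := norm_smul_inv_norm hv
  set α := ‖v‖ / Real.sqrt D
  have hα : 0 < α := by positivity
  have hα_sq : α ^ 2 = ‖v‖ ^ 2 / D := by rw [div_pow, Real.sq_sqrt hD.le]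
  refine ⟨axialMatrix (‖v‖⁻¹ • v) α (κ * α),
    det_axialMatrix_ne_zero hu hα.ne' (by positivity), ?_, ?_⟩
  · simpa [hα.ne'] using condNum_axialMatrix_le hu hα (le_mul_of_one_le_left hα.le hκ)
  · intro x
    have hnorm : ‖mulVecE (axialMatrix (‖v‖⁻¹ • v) α (κ * α)) x‖ ^ 2
        = (‖v‖ ^ 2 * ‖x‖ ^ 2 + (κ ^ 2 - 1) * ⟪v, x⟫ ^ 2) / D := by
      rw [norm_mulVecE_axialMatrix_sq hu, real_inner_smul_left, mul_pow, hα_sq]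
      field_simp
    change ‖_‖ ≤ 1 ↔ _
    rw [← sq_le_one_iff₀ (norm_nonneg _), hnorm, div_le_one hD]

lemma exists_ellip_subset_notMem {d : ℕ} {X : Set (EuclideanSpace ℝ (Fin d))}
    {v y : EuclideanSpace ℝ (Fin d)} (hv : v ≠ 0) {κ R : ℝ} (hκ : 1 ≤ κ) (hR : 0 < R)
    (hvR : ‖v‖ * R ≤ κ)
    (hXR : X ⊆ Metric.closedBall 0 R) (hXv : ∀ x ∈ X, |⟪v, x⟫| ≤ 1)
    (hy : Real.sqrt 2 < ⟪v, y⟫) :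
    ∃ B : Matrix (Fin d) (Fin d) ℝ, B.det ≠ 0 ∧ condNum B ≤ κ ∧ X ⊆ Ellip B ∧ y ∉ Ellip B := by
  have hκ_sq : 0 ≤ κ ^ 2 - 1 := by nlinarith
  have hD : 0 < ‖v‖ ^ 2 * R ^ 2 + κ ^ 2 - 1 := by
    have : 0 < ‖v‖ ^ 2 * R ^ 2 := by
      have := norm_pos_iff.2 hv
      positivity
    linarith
  obtain ⟨B, hBdet, hBcond, hBeq⟩ := exists_ellip_condNum_le_iff hv hκ hD
  refine ⟨B, hBdet, hBcond, fun x hx => ?_, fun hyB => ?_⟩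
  · have hxR : ‖x‖ ≤ R := by simpa using hXR hx
    have hvx : ⟪v, x⟫ ^ 2 ≤ 1 := by simpa using pow_le_pow_left₀ (abs_nonneg _) (hXv x hx) 2
    rw [hBeq]
    have : ‖v‖ ^ 2 * ‖x‖ ^ 2 ≤ ‖v‖ ^ 2 * R ^ 2 := by gcongr
    nlinarith
  · rw [hBeq] at hyB
    have h2 : 2 < ⟪v, y⟫ ^ 2 := Real.lt_sq_of_sqrt_lt hy
    have hvy : ⟪v, y⟫ ^ 2 ≤ ‖v‖ ^ 2 * ‖y‖ ^ 2 := by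
      rw [← mul_pow]
      exact pow_le_pow_left₀ ((Real.sqrt_nonneg 2).trans hy.le) (real_inner_le_norm v y) 2
    have hvR_sq : ‖v‖ ^ 2 * R ^ 2 ≤ κ ^ 2 := by
      rw [← mul_pow]
      exact pow_le_pow_left₀ (by positivity) hvR 2
    nlinarith

theorem stmt0_general (d : ℕ) (X : Set (EuclideanSpace ℝ (Fin d)))
    (hXcomp : IsCompact X) (hXconv : Convex ℝ X) (hXint : (interior X).Nonempty)
    (hXsymm : X = -X)
    (r R : ℝ)
    (hr : IsGreatest {s : ℝ | Metric.closedBall (0 : EuclideanSpace ℝ (Fin d)) s ⊆ X} r)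
    (hR : IsLeast {s : ℝ | X ⊆ Metric.closedBall (0 : EuclideanSpace ℝ (Fin d)) s} R)
    (E : Set (EuclideanSpace ℝ (Fin d)))
    (h : ∀ B : Matrix (Fin d) (Fin d) ℝ,
      B.det ≠ 0 → X ⊆ Ellip B → condNum B ≤ R / r → E ⊆ Ellip B) :
    E ⊆ Real.sqrt 2 • X := by
  intro y hyE
  by_contra hy
  have h0 : (0 : EuclideanSpace ℝ (Fin d)) ∈ interior X :=
    zero_mem_interior_of_eq_neg hXconv hXint hXsymm
  have hr0 : 0 < r := pos_of_isGreatest_closedBall_subset h0 hr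
  obtain ⟨v, hvX, hvy⟩ := exists_inner_le_one_lt_of_notMem hXconv hXcomp.isClosed
    (interior_subset h0) ((Set.mem_smul_set_iff_inv_smul_mem₀ (by positivity) X y).not.1 hy)
  rw [real_inner_smul_right, one_lt_inv_mul₀ (by positivity)] at hvy
  have hv : v ≠ 0 := fun hv => (Real.sqrt_nonneg 2).not_gt (by simpa [hv] using hvy)
  have : Nontrivial (EuclideanSpace ℝ (Fin d)) := ⟨⟨v, 0, hv⟩⟩
  have hrR : r ≤ R := le_of_closedBall_zero_subset_closedBall_zero hr0.le (hr.1.trans hR.1)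
  have hvr : ‖v‖ * r ≤ 1 := norm_mul_le_one_of_closedBall_subset hr0.le hr.1 hvX
  have hvR : ‖v‖ * R ≤ R / r := by
    rw [le_div_iff₀ hr0, mul_right_comm]
    exact mul_le_of_le_one_left (hr0.le.trans hrR) hvr
  obtain ⟨B, hBdet, hBcond, hXB, hyB⟩ := exists_ellip_subset_notMem hv ((one_le_div hr0).2 hrR)
    (hr0.trans_le hrR) hvR hR.1 (abs_inner_le_one_of_eq_neg hXsymm hvX) hvy
  exact hyB (h B hBdet hXB hBcond hyE)

/-- If every origin-centered ellipsoid that contains the centrally symmetric convex body `X`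
and has aspect ratio at most `κ(X) = R / r` also contains the origin-centered ellipsoid `E`,
then `E ⊆ √2 • X`. -/
theorem stmt0 (d : ℕ) (X : Set (EuclideanSpace ℝ (Fin d)))
    (hXcomp : IsCompact X) (hXconv : Convex ℝ X) (hXint : (interior X).Nonempty)
    (hXsymm : X = -X)
    (r R : ℝ)
    (hr : IsGreatest {s : ℝ | Metric.closedBall (0 : EuclideanSpace ℝ (Fin d)) s ⊆ X} r)
    (hR : IsLeast {s : ℝ | X ⊆ Metric.closedBall (0 : EuclideanSpace ℝ (Fin d)) s} R)
    (E : Set (EuclideanSpace ℝ (Fin d)))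
    (A : Matrix (Fin d) (Fin d) ℝ) (hA : A.det ≠ 0) (hE : E = Ellip A)
    (h : ∀ B : Matrix (Fin d) (Fin d) ℝ,
      B.det ≠ 0 → X ⊆ Ellip B → condNum B ≤ R / r → E ⊆ Ellip B) :
    E ⊆ Real.sqrt 2 • X :=
  stmt0_general d X hXcomp hXconv hXint hXsymm r R hr hR E h
end
end

section
/- Let A ∈ ℝ^{d×d} be nonsingular and x ∈ ℝ^d with ‖A x‖ > 1, and let Â be the update matrix for (A, x). Then the ellipsoid E_{ÂA} determined by ÂA contains E_A, contains x (indeed ‖ÂA x‖ = 1), and has minimum volume among all origin-centered ellipsoids containing E_A and x: for every nonsingular B ∈ ℝ^{d×d} with E_A ⊆ E_B and ‖B x‖ ≤ 1, one has |det B| ≤ |det(ÂA)|. -/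
noncomputable section

open scoped Pointwise

/-- Squared Frobenius norm. -/
def frobSq {d : ℕ} (A : Matrix (Fin d) (Fin d) ℝ) : ℝ :=
  ∑ i, ∑ j, (A i j) ^ 2

/-- Minimum-volume-ellipsoid update matrix `Â` for `(A, x)`. -/
def updateMatrix {d : ℕ} (A : Matrix (Fin d) (Fin d) ℝ) (x : EuclideanSpace ℝ (Fin d)) :
    Matrix (Fin d) (Fin d) ℝ :=
  1 - ((1 - (‖mulVecE A x‖)⁻¹) / ‖mulVecE A x‖ ^ 2) •
        Matrix.vecMulVec (mulVecE A x) (mulVecE A x)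

/-- Potential function `Φ_J(A)`. -/
def potential {d : ℕ} (J A : Matrix (Fin d) (Fin d) ℝ) : ℝ :=
  frobSq (J * A⁻¹) - 2 * Real.log |(J * A⁻¹).det|

/-!
Write `y = A x` and `r = ‖y‖ > 1`. The update `Â` fixes `y^⊥` and scales `y` by `1/r`, so it is a
contraction with `‖Â y‖ = 1` and `det Â = 1/r`; as `E_{ÂA}` is the preimage of the unit ball under
`ÂA`, this gives the containments.

For optimality, `E_A ⊆ E_B` says exactly that `C = B A⁻¹` is a contraction, and `‖C y‖ = ‖B x‖ ≤ 1`.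
A contraction `T` satisfies `|det T| ‖w‖ ≤ ‖T w‖` for every `w`: the eigenvalues of `T* T` lie in
`[0, 1]`, so their product `(det T)²` is at most each of them, hence at most the Rayleigh quotient
`‖T w‖² / ‖w‖²`. With `w = y` this gives `|det C| ≤ 1/r`, i.e. `|det B| ≤ |det (ÂA)|`.
-/

open Module RealInnerProductSpace

namespace LinearMap

variable {E : Type*} [NormedAddCommGroup E] [InnerProductSpace ℝ E] [FiniteDimensional ℝ E]

theorem IsSymmetric.inner_apply_self_eq_sum_eigenvalues {T : E →ₗ[ℝ] E} (hT : T.IsSymmetric)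
    {n : ℕ} (hn : finrank ℝ E = n) (w : E) :
    ⟪T w, w⟫ = ∑ i, hT.eigenvalues hn i * ⟪hT.eigenvectorBasis hn i, w⟫ ^ 2 := by
  rw [← (hT.eigenvectorBasis hn).sum_inner_mul_inner]
  refine Finset.sum_congr rfl fun i _ => ?_
  rw [hT w, hT.apply_eigenvectorBasis, real_inner_comm]
  simp only [RCLike.ofReal_real_eq_id, id_eq, real_inner_smul_left]
  ring

theorem abs_det_mul_norm_le_norm_apply {T : E →ₗ[ℝ] E} (hT : ∀ v, ‖T v‖ ≤ ‖v‖) (w : E) :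
    |T.det| * ‖w‖ ≤ ‖T w‖ := by
  have hS := isPositive_adjoint_comp_self T
  set b := hS.isSymmetric.eigenvectorBasis rfl
  set μ := hS.isSymmetric.eigenvalues rfl
  have hquad : ∀ v, ⟪(adjoint T ∘ₗ T) v, v⟫ = ‖T v‖ ^ 2 := fun v => by
    rw [comp_apply, adjoint_inner_left, real_inner_self_eq_norm_sq]
  have hμ_le_one : ∀ i, μ i ≤ 1 := fun i => by
    have hμ : μ i = ‖T (b i)‖ ^ 2 := by
      have h := hquad (b i)
      rw [hS.isSymmetric.apply_eigenvectorBasis, real_inner_smul_left,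
        real_inner_self_eq_norm_sq, b.norm_eq_one] at h
      simpa using h
    rw [hμ]
    exact pow_le_one₀ (norm_nonneg _) ((hT (b i)).trans_eq (b.norm_eq_one i))
  have hdet_le : ∀ i, (adjoint T ∘ₗ T).det ≤ μ i := fun i => by
    rw [hS.isSymmetric.det_eq_prod_eigenvalues rfl]
    simp only [RCLike.ofReal_real_eq_id, id_eq]
    rw [← Finset.prod_erase_mul _ _ (Finset.mem_univ i)]
    exact mul_le_of_le_one_left (hS.nonneg_eigenvalues rfl i)
      (Finset.prod_le_one (fun j _ => hS.nonneg_eigenvalues rfl j) fun j _ => hμ_le_one j)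
  have hsq : (|T.det| * ‖w‖) ^ 2 ≤ ‖T w‖ ^ 2 := calc
    (|T.det| * ‖w‖) ^ 2 = ∑ i, (adjoint T ∘ₗ T).det * ⟪b i, w⟫ ^ 2 := by
      rw [← Finset.mul_sum, b.sum_sq_inner_right, ← normDet_sq, normDet_eq_abs_det, mul_pow]
      rfl
    _ ≤ ∑ i, μ i * ⟪b i, w⟫ ^ 2 :=
      Finset.sum_le_sum fun i _ => mul_le_mul_of_nonneg_right (hdet_le i) (sq_nonneg _)
    _ = ‖T w‖ ^ 2 := by rw [← hS.isSymmetric.inner_apply_self_eq_sum_eigenvalues, hquad]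
  exact (sq_le_sq₀ (by positivity) (norm_nonneg _)).1 hsq

end LinearMap

theorem norm_sub_smul_inner_smul_le {E : Type*} [NormedAddCommGroup E] [InnerProductSpace ℝ E]
    {y : E} (hy : 1 ≤ ‖y‖) (v : E) :
    ‖v - ((1 - ‖y‖⁻¹) / ‖y‖ ^ 2 * ⟪y, v⟫) • y‖ ≤ ‖v‖ := by
  have hy₀ : ‖y‖ ≠ 0 := (zero_lt_one.trans_le hy).ne'
  have hsq : ‖v - ((1 - ‖y‖⁻¹) / ‖y‖ ^ 2 * ⟪y, v⟫) • y‖ ^ 2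
      = ‖v‖ ^ 2 - (1 - (‖y‖ ^ 2)⁻¹) * (⟪y, v⟫ / ‖y‖) ^ 2 := by
    rw [norm_sub_sq_real, real_inner_smul_right, norm_smul, mul_pow, Real.norm_eq_abs, sq_abs,
      real_inner_comm y v]
    field_simp
    ring
  have hshrink : 0 ≤ (1 - (‖y‖ ^ 2)⁻¹) * (⟪y, v⟫ / ‖y‖) ^ 2 :=
    mul_nonneg (sub_nonneg.2 (inv_le_one_of_one_le₀ (one_le_pow₀ hy))) (sq_nonneg _)
  exact (sq_le_sq₀ (norm_nonneg _) (norm_nonneg _)).1 (by linarith)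

open Matrix

section Ellipsoid

variable {d : ℕ}

theorem mulVecE_mul (A B : Matrix (Fin d) (Fin d) ℝ) (x : EuclideanSpace ℝ (Fin d)) :
    mulVecE (A * B) x = mulVecE A (mulVecE B x) := by
  simp [mulVecE, mulVec_mulVec]

theorem abs_det_mul_norm_le_norm_mulVecE {C : Matrix (Fin d) (Fin d) ℝ}
    (hC : ∀ v, ‖mulVecE C v‖ ≤ ‖v‖) (w : EuclideanSpace ℝ (Fin d)) :
    |C.det| * ‖w‖ ≤ ‖mulVecE C w‖ := by
  have h := LinearMap.abs_det_mul_norm_le_norm_apply (T := toEuclideanLin C) hC w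
  simp only [LinearMap.det_toLpLin] at h
  exact h

theorem ellip_subset_ellip_mul_iff {A : Matrix (Fin d) (Fin d) ℝ} (hA : IsUnit A.det)
    (U : Matrix (Fin d) (Fin d) ℝ) :
    Ellip A ⊆ Ellip (U * A) ↔ ∀ v, ‖mulVecE U v‖ ≤ ‖v‖ := by
  refine ⟨fun h v => ?_, fun h z hz => (mulVecE_mul U A z ▸ h _).trans hz⟩
  have hU : ‖toEuclideanCLM (𝕜 := ℝ) U‖ ≤ 1 := by
    refine ContinuousLinearMap.opNorm_le_of_unit_norm zero_le_one fun w hw => ?_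
    have hAw : mulVecE A (mulVecE A⁻¹ w) = w := by
      rw [← mulVecE_mul, mul_nonsing_inv A hA]; simp [mulVecE]
    have hmem : ‖mulVecE A (mulVecE A⁻¹ w)‖ ≤ 1 := by rw [hAw, hw]
    have hUw : ‖mulVecE (U * A) (mulVecE A⁻¹ w)‖ ≤ 1 := h hmem
    rw [mulVecE_mul, hAw] at hUw
    exact hUw
  exact ((toEuclideanCLM (𝕜 := ℝ) U).le_of_opNorm_le hU v).trans_eq (one_mul _)

theorem mulVecE_updateMatrix (A : Matrix (Fin d) (Fin d) ℝ) (x v : EuclideanSpace ℝ (Fin d)) :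
    mulVecE (updateMatrix A x) v = v -
      ((1 - ‖mulVecE A x‖⁻¹) / ‖mulVecE A x‖ ^ 2 * ⟪mulVecE A x, v⟫) • mulVecE A x := by
  rw [EuclideanSpace.inner_eq_star_dotProduct, star_trivial, dotProduct_comm]
  simp only [mulVecE, updateMatrix, sub_mulVec, one_mulVec, smul_mulVec, vecMulVec_mulVec,
    op_smul_eq_smul, smul_smul]
  rfl

theorem mulVecE_updateMatrix_self (A : Matrix (Fin d) (Fin d) ℝ) (x : EuclideanSpace ℝ (Fin d))
    (hx : ‖mulVecE A x‖ ≠ 0) :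
    mulVecE (updateMatrix A x) (mulVecE A x) = ‖mulVecE A x‖⁻¹ • mulVecE A x := by
  rw [mulVecE_updateMatrix, real_inner_self_eq_norm_sq, div_mul_cancel₀ _ (pow_ne_zero 2 hx),
    sub_smul, one_smul, sub_sub_cancel]

theorem det_updateMatrix (A : Matrix (Fin d) (Fin d) ℝ) (x : EuclideanSpace ℝ (Fin d))
    (hx : ‖mulVecE A x‖ ≠ 0) :
    (updateMatrix A x).det = ‖mulVecE A x‖⁻¹ := by
  have hyy : (mulVecE A x).ofLp ⬝ᵥ (mulVecE A x).ofLp = ‖mulVecE A x‖ ^ 2 := by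
    rw [← real_inner_self_eq_norm_sq, EuclideanSpace.inner_eq_star_dotProduct, star_trivial]
  rw [updateMatrix, sub_eq_add_neg, ← neg_smul, ← smul_vecMulVec, vecMulVec_eq Unit,
    det_one_add_replicateCol_mul_replicateRow, dotProduct_smul, hyy, smul_eq_mul]
  field_simp
  ring

end Ellipsoid

/-- The minimum-volume-ellipsoid update: `E_{ÂA}` contains `E_A`, contains `x` (with
`‖ÂA x‖ = 1`), and has minimum volume among all origin-centered ellipsoids containing
`E_A` and `x`. -/
theorem stmt2 (d : ℕ) (A : Matrix (Fin d) (Fin d) ℝ) (hA : A.det ≠ 0)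
    (x : EuclideanSpace ℝ (Fin d)) (hx : 1 < ‖mulVecE A x‖) :
    Ellip A ⊆ Ellip (updateMatrix A x * A) ∧
    x ∈ Ellip (updateMatrix A x * A) ∧
    ‖mulVecE (updateMatrix A x * A) x‖ = 1 ∧
    ∀ B : Matrix (Fin d) (Fin d) ℝ, B.det ≠ 0 → Ellip A ⊆ Ellip B →
      ‖mulVecE B x‖ ≤ 1 → |B.det| ≤ |(updateMatrix A x * A).det| := by
  set r := ‖mulVecE A x‖
  have hr : 0 < r := zero_lt_one.trans hx
  have hAu : IsUnit A.det := hA.isUnit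
  have hÂx : ‖mulVecE (updateMatrix A x * A) x‖ = 1 := by
    rw [mulVecE_mul, mulVecE_updateMatrix_self A x hr.ne', norm_smul, norm_inv, norm_norm,
      inv_mul_cancel₀ hr.ne']
  have hÂ : ∀ v, ‖mulVecE (updateMatrix A x) v‖ ≤ ‖v‖ := fun v => by
    rw [mulVecE_updateMatrix]
    exact norm_sub_smul_inner_smul_le hx.le v
  refine ⟨(ellip_subset_ellip_mul_iff hAu _).2 hÂ, hÂx.le, hÂx, fun B _ hAB hBx => ?_⟩
  have hB : B = B * A⁻¹ * A := by rw [Matrix.mul_assoc, nonsing_inv_mul A hAu, Matrix.mul_one]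
  rw [hB] at hAB hBx
  have hC : |(B * A⁻¹).det| ≤ r⁻¹ := by
    rw [inv_eq_one_div r, le_div_iff₀ hr]
    refine (abs_det_mul_norm_le_norm_mulVecE ((ellip_subset_ellip_mul_iff hAu _).1 hAB) _).trans ?_
    rwa [← mulVecE_mul]
  rw [hB, det_mul, det_mul (updateMatrix A x), det_updateMatrix A x hr.ne', abs_mul, abs_mul,
    abs_inv, abs_norm]
  exact mul_le_mul_of_nonneg_right hC (abs_nonneg _)
end
end

section
/- For every nonsingular matrix M ∈ ℝ^{d×d}, one has σ_max(M)² ≤ (e/(e−1)) · (‖M‖_F² − 2 log|det M|), where σ_max(M) is the largest singular value of M. -/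
/-!
Write `F = ‖M‖_F²` and `L = 2 log |det M| = log det (MᵀM)`. The operator norm is dominated by
the Frobenius norm, so `σ_max(M)² ≤ F`. Applying `log x ≤ x / e` to the eigenvalues of the
positive definite matrix `MᵀM` gives `L ≤ tr (MᵀM) / e = F / e`. Hence
`F - L ≥ (1 - 1/e) F ≥ (1 - 1/e) σ_max(M)²`.
-/

noncomputable section

open scoped Pointwise

open Real Matrix

lemma Real.log_le_div_exp_one {x : ℝ} (hx : 0 < x) : log x ≤ x / exp 1 := by
  have h := log_le_sub_one_of_pos (div_pos hx (exp_pos 1))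
  rw [log_div hx.ne' (exp_ne_zero 1), log_exp] at h
  linarith

lemma Matrix.PosDef.log_det_le_trace_div_exp_one {n : Type*} [Fintype n] [DecidableEq n]
    {S : Matrix n n ℝ} (hS : S.PosDef) : log S.det ≤ S.trace / exp 1 := by
  rw [hS.1.det_eq_prod_eigenvalues, hS.1.trace_eq_sum_eigenvalues]
  simp only [RCLike.ofReal_real_eq_id, id_eq]
  rw [log_prod fun i _ => (hS.eigenvalues_pos i).ne', Finset.sum_div]
  exact Finset.sum_le_sum fun i _ => log_le_div_exp_one (hS.eigenvalues_pos i)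

lemma frobSq_eq_trace_transpose_mul {d : ℕ} (M : Matrix (Fin d) (Fin d) ℝ) :
    frobSq M = (Mᵀ * M).trace := by
  rw [frobSq, trace, Finset.sum_comm]
  simp [mul_apply, sq]

lemma sMax_sq_le_frobSq {d : ℕ} (M : Matrix (Fin d) (Fin d) ℝ) : sMax M ^ 2 ≤ frobSq M := by
  have hF : 0 ≤ frobSq M := by unfold frobSq; positivity
  suffices sMax M ≤ √(frobSq M) by
    exact (pow_le_pow_left₀ (norm_nonneg _) this 2).trans_eq (sq_sqrt hF)
  refine ContinuousLinearMap.opNorm_le_bound _ (sqrt_nonneg _) fun x => ?_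
  rw [← sqrt_sq (norm_nonneg _), ← sqrt_sq (norm_nonneg x), ← sqrt_mul hF]
  refine sqrt_le_sqrt ?_
  simp only [EuclideanSpace.norm_sq_eq, ofLp_toEuclideanCLM, mulVec, dotProduct,
    Real.norm_eq_abs, sq_abs, frobSq]
  rw [Finset.sum_mul]
  exact Finset.sum_le_sum fun i _ => Finset.sum_mul_sq_le_sq_mul_sq _ (M i) x.ofLp

lemma two_mul_log_abs_det_le_frobSq_div_exp_one {d : ℕ} {M : Matrix (Fin d) (Fin d) ℝ}
    (hM : M.det ≠ 0) : 2 * log |M.det| ≤ frobSq M / exp 1 := by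
  have hpos : (Mᵀ * M).PosDef := by
    simpa using PosDef.conjTranspose_mul_self M (mulVec_injective_of_det_ne_zero hM)
  have hlog : 2 * log |M.det| = log (Mᵀ * M).det := by
    rw [det_mul, det_transpose, ← log_abs (M.det * M.det), abs_mul, log_mul]
    · ring
    all_goals simpa using hM
  rw [hlog, frobSq_eq_trace_transpose_mul]
  exact hpos.log_det_le_trace_div_exp_one

/-- `σ_max(M)² ≤ (e/(e-1)) · (‖M‖_F² − 2 log |det M|)` for nonsingular `M`. -/
theorem stmt4 (d : ℕ) (M : Matrix (Fin d) (Fin d) ℝ) (hM : M.det ≠ 0) :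
    sMax M ^ 2 ≤
      Real.exp 1 / (Real.exp 1 - 1) * (frobSq M - 2 * Real.log |M.det|) := by
  have he : 0 < exp 1 - 1 := by linarith [add_one_lt_exp one_ne_zero]
  calc sMax M ^ 2 ≤ frobSq M := sMax_sq_le_frobSq M
    _ = exp 1 / (exp 1 - 1) * (frobSq M - frobSq M / exp 1) := by field_simp
    _ ≤ exp 1 / (exp 1 - 1) * (frobSq M - 2 * log |M.det|) := by
      gcongr
      exact two_mul_log_abs_det_le_frobSq_div_exp_one hM
end
end

section
/- Let A, J ∈ ℝ^{d×d} be nonsingular and x ∈ ℝ^d with ‖A x‖ > 1, and let Â be the update matrix for (A, x). Then ‖J·(ÂA)^{-1}‖_F² = ‖J·A^{-1}‖_F² + (1 − 1/‖A x‖²) · ‖J x‖². -/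
noncomputable section

open scoped Pointwise

/-! With `y = A x` and `r = ‖y‖`, the update `Â = 1 - c y yᵀ` is inverted in closed form,
`Â⁻¹ = 1 + ((r - 1) / r²) y yᵀ` (Sherman–Morrison), so `J (ÂA)⁻¹ = J A⁻¹ + ((r - 1) / r²) (J x) yᵀ`
is a rank-one perturbation of `J A⁻¹`. Its cross term with `J A⁻¹` is `⟪J A⁻¹ y, J x⟫ = ‖J x‖²`,
and the coefficients add up to `2 (r - 1) / r² + (r - 1)² / r² = 1 - 1 / r²`. -/

open Matrix

@[simp]
lemma ofLp_mulVecE {d : ℕ} (A : Matrix (Fin d) (Fin d) ℝ) (x : EuclideanSpace ℝ (Fin d)) :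
    (mulVecE A x).ofLp = A *ᵥ x :=
  rfl

lemma sq_norm_mulVecE {d : ℕ} (A : Matrix (Fin d) (Fin d) ℝ) (x : EuclideanSpace ℝ (Fin d)) :
    ‖mulVecE A x‖ ^ 2 = A *ᵥ x ⬝ᵥ A *ᵥ x := by
  rw [EuclideanSpace.real_norm_sq_eq]
  simp [dotProduct, sq]

lemma frobSq_add_vecMulVec {d : ℕ} (M : Matrix (Fin d) (Fin d) ℝ) (u y : Fin d → ℝ) :
    frobSq (M + vecMulVec u y) = frobSq M + 2 * (u ⬝ᵥ M *ᵥ y) + (u ⬝ᵥ u) * (y ⬝ᵥ y) := by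
  simp only [frobSq, mulVec, dotProduct]
  rw [Finset.sum_mul_sum]
  simp only [Matrix.add_apply, vecMulVec_apply, Finset.mul_sum, ← Finset.sum_add_distrib]
  exact Finset.sum_congr rfl fun i _ => Finset.sum_congr rfl fun j _ => by ring

lemma one_sub_smul_vecMulVec_mul_one_add_smul {n : Type*} [Fintype n] [DecidableEq n]
    (y : n → ℝ) {a b : ℝ} (h : b - a - a * b * (y ⬝ᵥ y) = 0) :
    (1 - a • vecMulVec y y) * (1 + b • vecMulVec y y) = 1 := by
  rw [sub_mul, mul_add, mul_add, one_mul, mul_one, one_mul, smul_mul_smul_comm,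
    vecMulVec_mul_vecMulVec, vecMulVec_smul, smul_smul]
  linear_combination (norm := module) h • vecMulVec y y

lemma inv_updateMatrix_mul {d : ℕ} {A : Matrix (Fin d) (Fin d) ℝ} (hA : A.det ≠ 0)
    {x : EuclideanSpace ℝ (Fin d)} (hAx : ‖mulVecE A x‖ ≠ 0) :
    (updateMatrix A x * A)⁻¹ =
      A⁻¹ + ((‖mulVecE A x‖ - 1) / ‖mulVecE A x‖ ^ 2) • vecMulVec x (A *ᵥ x) := by
  refine inv_eq_right_inv ?_
  rw [mul_assoc, mul_add, mul_nonsing_inv A hA.isUnit, Matrix.mul_smul, mul_vecMulVec,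
    updateMatrix, ofLp_mulVecE]
  refine one_sub_smul_vecMulVec_mul_one_add_smul _ ?_
  rw [← sq_norm_mulVecE]
  field_simp
  ring

theorem stmt7_general (d : ℕ) (A J : Matrix (Fin d) (Fin d) ℝ)
    (hA : A.det ≠ 0)
    (x : EuclideanSpace ℝ (Fin d)) (hx : 1 < ‖mulVecE A x‖) :
    frobSq (J * (updateMatrix A x * A)⁻¹) =
      frobSq (J * A⁻¹) + (1 - (‖mulVecE A x‖ ^ 2)⁻¹) * ‖mulVecE J x‖ ^ 2 := by
  have hr : ‖mulVecE A x‖ ≠ 0 := by positivity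
  have hJx : (J * A⁻¹) *ᵥ (A *ᵥ x) = J *ᵥ x := by
    rw [mulVec_mulVec, mul_assoc, nonsing_inv_mul A hA.isUnit, mul_one]
  rw [inv_updateMatrix_mul hA hr, mul_add, Matrix.mul_smul, mul_vecMulVec, ← smul_vecMulVec,
    frobSq_add_vecMulVec, dotProduct_smul, hJx, smul_dotProduct, ← sq_norm_mulVecE,
    ← sq_norm_mulVecE]
  simp only [smul_eq_mul]
  field_simp
  ring

/-- Frobenius-norm update formula:
`‖J (ÂA)⁻¹‖_F² = ‖J A⁻¹‖_F² + (1 − 1/‖A x‖²) ‖J x‖²`. -/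
theorem stmt7 (d : ℕ) (A J : Matrix (Fin d) (Fin d) ℝ)
    (hA : A.det ≠ 0) (hJ : J.det ≠ 0)
    (x : EuclideanSpace ℝ (Fin d)) (hx : 1 < ‖mulVecE A x‖) :
    frobSq (J * (updateMatrix A x * A)⁻¹) =
      frobSq (J * A⁻¹) + (1 - (‖mulVecE A x‖ ^ 2)⁻¹) * ‖mulVecE J x‖ ^ 2 :=
  stmt7_general d A J hA x hx
end
end

section
/- Let A, J ∈ ℝ^{d×d} be nonsingular and x ∈ ℝ^d with ‖A x‖ > 1 and ‖J x‖ ≤ 1, and let Â be the update matrix for (A, x). Then Φ_J(ÂA) ≤ Φ_J(A); that is, the potential does not increase under the minimum-volume-ellipsoid update. -/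
/-!
With `y = A x` and `r = ‖y‖`, the update `Â = 1 - ((1 - r⁻¹) / r²) y yᵀ` has inverse
`1 + ((r - 1) / r²) y yᵀ`, so `J (Â A)⁻¹ = J A⁻¹ + ((r - 1) / r²) (J x) yᵀ` is a rank-one
perturbation of `J A⁻¹` along `J A⁻¹ y = J x`. Its squared Frobenius norm grows by exactly
`(1 - r⁻²) ‖J x‖²` and its determinant is multiplied by `r`, so `Φ_J` changes by
`(1 - r⁻²) ‖J x‖² - 2 log r ≤ 1 - r⁻² - log r² ≤ 0`, using `‖J x‖ ≤ 1` and `1 - t⁻¹ ≤ log t`.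
-/

noncomputable section

open scoped Pointwise

open Matrix

theorem Matrix.det_one_add_vecMulVec {n α : Type*} [Fintype n] [DecidableEq n] [CommRing α]
    (u v : n → α) : (1 + vecMulVec u v).det = 1 + v ⬝ᵥ u := by
  rw [vecMulVec_eq Unit, det_one_add_replicateCol_mul_replicateRow]

theorem Matrix.one_sub_smul_vecMulVec_mul_one_add_smul_vecMulVec {n α : Type*} [Fintype n]
    [DecidableEq n] [CommRing α] (y : n → α) {c s : α} (h : s = c + c * s * (y ⬝ᵥ y)) :
    (1 - c • vecMulVec y y) * (1 + s • vecMulVec y y) = 1 := by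
  rw [sub_mul, mul_add, mul_add, one_mul, mul_one, one_mul, smul_mul_smul_comm,
    vecMulVec_mul_vecMulVec, vecMulVec_smul]
  linear_combination (norm := module) h • vecMulVec y y

theorem EuclideanSpace.dotProduct_self_eq_norm_sq {n : Type*} [Fintype n]
    (y : EuclideanSpace ℝ n) : y.ofLp ⬝ᵥ y.ofLp = ‖y‖ ^ 2 := by
  rw [← real_inner_self_eq_norm_sq, EuclideanSpace.inner_eq_star_dotProduct, star_trivial]

theorem frobSq_add_smul_vecMulVec {d : ℕ} (M : Matrix (Fin d) (Fin d) ℝ) (s : ℝ) (y : Fin d → ℝ) :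
    frobSq (M + s • vecMulVec (M *ᵥ y) y) =
      frobSq M + (2 * s + s ^ 2 * (y ⬝ᵥ y)) * ((M *ᵥ y) ⬝ᵥ (M *ᵥ y)) := by
  have row (i : Fin d) : ∑ j, (M i j + s * ((M *ᵥ y) i * y j)) ^ 2 =
      ∑ j, M i j ^ 2 + (2 * s + s ^ 2 * (y ⬝ᵥ y)) * ((M *ᵥ y) i * (M *ᵥ y) i) := by
    have hMy : (M *ᵥ y) i = ∑ j, M i j * y j := rfl
    have expand (j : Fin d) : (M i j + s * ((M *ᵥ y) i * y j)) ^ 2 = M i j ^ 2 +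
        2 * s * (M *ᵥ y) i * (M i j * y j) + s ^ 2 * ((M *ᵥ y) i * (M *ᵥ y) i) * (y j * y j) := by
      ring
    simp only [expand, Finset.sum_add_distrib, ← Finset.mul_sum, ← hMy, dotProduct]
    ring
  simp only [frobSq, Matrix.add_apply, Matrix.smul_apply, vecMulVec_apply, smul_eq_mul, row,
    Finset.sum_add_distrib, ← Finset.mul_sum, dotProduct]

theorem inv_updateMatrix {d : ℕ} {A : Matrix (Fin d) (Fin d) ℝ} {x : EuclideanSpace ℝ (Fin d)}
    (hx : ‖mulVecE A x‖ ≠ 0) :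
    (updateMatrix A x)⁻¹ =
      1 + ((‖mulVecE A x‖ - 1) / ‖mulVecE A x‖ ^ 2) • vecMulVec (A *ᵥ x) (A *ᵥ x) := by
  refine inv_eq_right_inv (one_sub_smul_vecMulVec_mul_one_add_smul_vecMulVec _ ?_)
  rw [EuclideanSpace.dotProduct_self_eq_norm_sq (mulVecE A x)]
  field_simp
  ring

theorem potential_updateMatrix_mul {d : ℕ} {A J : Matrix (Fin d) (Fin d) ℝ} (hA : A.det ≠ 0)
    (hJ : J.det ≠ 0) {x : EuclideanSpace ℝ (Fin d)} (hx : ‖mulVecE A x‖ ≠ 0) :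
    potential J (updateMatrix A x * A) = potential J A +
      (1 - (‖mulVecE A x‖ ^ 2)⁻¹) * ‖mulVecE J x‖ ^ 2 - 2 * Real.log ‖mulVecE A x‖ := by
  have hU := inv_updateMatrix hx
  set r := ‖mulVecE A x‖
  have hyy : (A *ᵥ x) ⬝ᵥ (A *ᵥ x) = r ^ 2 :=
    EuclideanSpace.dotProduct_self_eq_norm_sq (mulVecE A x)
  have hww : (J *ᵥ x) ⬝ᵥ (J *ᵥ x) = ‖mulVecE J x‖ ^ 2 :=
    EuclideanSpace.dotProduct_self_eq_norm_sq (mulVecE J x)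
  have hJA : (J * A⁻¹) *ᵥ (A *ᵥ x) = J *ᵥ x := by
    rw [mulVec_mulVec, Matrix.mul_assoc, nonsing_inv_mul _ hA.isUnit, Matrix.mul_one]
  have hinv : J * (updateMatrix A x * A)⁻¹ =
      J * A⁻¹ + ((r - 1) / r ^ 2) • vecMulVec (J *ᵥ x) (A *ᵥ x) := by
    rw [Matrix.mul_inv_rev, hU, ← Matrix.mul_assoc, Matrix.mul_add, Matrix.mul_one,
      Matrix.mul_smul, mul_vecMulVec, hJA]
  have hfrob : frobSq (J * (updateMatrix A x * A)⁻¹) =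
      frobSq (J * A⁻¹) + (1 - (r ^ 2)⁻¹) * ‖mulVecE J x‖ ^ 2 := by
    rw [hinv, ← hJA, frobSq_add_smul_vecMulVec, hJA, hyy, hww]
    congr 2
    field_simp
    ring
  have hdet : (J * (updateMatrix A x * A)⁻¹).det = (J * A⁻¹).det * r := by
    rw [Matrix.mul_inv_rev, ← Matrix.mul_assoc, det_mul, hU, ← smul_vecMulVec,
      det_one_add_vecMulVec, dotProduct_smul, hyy, smul_eq_mul]
    field_simp
    ring
  have hdetM : (J * A⁻¹).det ≠ 0 := by simp [det_mul, hA, hJ]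
  rw [potential, potential, hfrob, hdet, abs_mul, abs_norm,
    Real.log_mul (abs_ne_zero.2 hdetM) hx]
  ring

theorem one_sub_inv_sq_mul_le_two_log {r q : ℝ} (hr : 1 ≤ r) (hq : q ≤ 1) :
    (1 - (r ^ 2)⁻¹) * q ≤ 2 * Real.log r :=
  calc (1 - (r ^ 2)⁻¹) * q ≤ 1 - (r ^ 2)⁻¹ :=
        mul_le_of_le_one_right (sub_nonneg.2 (inv_le_one_of_one_le₀ (one_le_pow₀ hr))) hq
    _ ≤ Real.log (r ^ 2) := Real.one_sub_inv_le_log_of_pos (by positivity)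
    _ = 2 * Real.log r := by rw [Real.log_pow, Nat.cast_ofNat]

/-- The potential `Φ_J` does not increase under the minimum-volume-ellipsoid update. -/
theorem stmt9 (d : ℕ) (A J : Matrix (Fin d) (Fin d) ℝ)
    (hA : A.det ≠ 0) (hJ : J.det ≠ 0)
    (x : EuclideanSpace ℝ (Fin d)) (hx : 1 < ‖mulVecE A x‖)
    (hJx : ‖mulVecE J x‖ ≤ 1) :
    potential J (updateMatrix A x * A) ≤ potential J A := by
  rw [potential_updateMatrix_mul hA hJ (by positivity)]
  have := one_sub_inv_sq_mul_le_two_log hx.le (pow_le_one₀ (n := 2) (norm_nonneg _) hJx)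
  linarith
end
end

section
/- Let 0 < r ≤ R and let J ∈ ℝ^{d×d} be nonsingular with 1/R ≤ σ_max(J) ≤ 1/r and σ_max(J)/σ_min(J) ≤ R/r. Let A_0 = (1/r)·I. Then Φ_J(A_0) ≤ d·(1 + 4 log(R/r)). -/
noncomputable section

open scoped Pointwise

/-!
The potential splits as `‖B‖_F² - 2 log |det B|` with `B = J A₀⁻¹ = r J`. Every column of `B`
has length at most `σ_max(B) ≤ 1`, so `‖B‖_F² ≤ d`. A linear map scales volume by `|det|` and maps
the unit ball into the ball of radius its operator norm, so `|det B⁻¹| ≤ σ_max(B⁻¹)^d`; the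
singular-value hypotheses give `σ_max(B⁻¹) = σ_max(J⁻¹) / r ≤ (R / r)²`, whence
`-2 log |det B| ≤ 4 d log (R / r)`.
-/

open MeasureTheory Metric Module in
theorem ContinuousLinearMap.abs_det_le_opNorm_pow {E : Type*} [NormedAddCommGroup E]
    [NormedSpace ℝ E] [FiniteDimensional ℝ E] (f : E →L[ℝ] E) :
    |LinearMap.det (f : E →ₗ[ℝ] E)| ≤ ‖f‖ ^ finrank ℝ E := by
  borelize E
  set μ : Measure E := Measure.addHaar
  have hmaps : f '' closedBall 0 1 ⊆ closedBall 0 ‖f‖ := by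
    rintro _ ⟨x, hx, rfl⟩
    simpa using f.le_opNorm_of_le (mem_closedBall_zero_iff.mp hx)
  have hvol := measure_mono (μ := μ) hmaps
  rw [Measure.addHaar_image_continuousLinearMap, Measure.addHaar_closedBall' μ 0 (norm_nonneg f),
    ENNReal.mul_le_mul_iff_left (measure_closedBall_pos μ 0 one_pos).ne'
      measure_closedBall_lt_top.ne] at hvol
  exact (ENNReal.ofReal_le_ofReal_iff (by positivity)).mp hvol

section SingularValues

variable {d : ℕ}

theorem sMax_nonneg (B : Matrix (Fin d) (Fin d) ℝ) : 0 ≤ sMax B :=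
  norm_nonneg _

theorem sMax_smul (c : ℝ) (B : Matrix (Fin d) (Fin d) ℝ) : sMax (c • B) = |c| * sMax B := by
  simp [sMax, norm_smul]

theorem sMax_div_sMin (B : Matrix (Fin d) (Fin d) ℝ) :
    sMax B / sMin B = sMax B * sMax B⁻¹ := by
  rw [sMin, div_inv_eq_mul]

theorem abs_det_le_sMax_pow (B : Matrix (Fin d) (Fin d) ℝ) : |B.det| ≤ sMax B ^ d := by
  simpa only [sMax, Matrix.coe_toEuclideanCLM_eq_toEuclideanLin, Matrix.toLpLin_eq_toLin,
    LinearMap.det_toLin, finrank_euclideanSpace, Fintype.card_fin]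
    using (Matrix.toEuclideanCLM (𝕜 := ℝ) B).abs_det_le_opNorm_pow

theorem sum_sq_col_le_sMax_sq (B : Matrix (Fin d) (Fin d) ℝ) (j : Fin d) :
    ∑ i, B i j ^ 2 ≤ sMax B ^ 2 := by
  have hcol : Matrix.toEuclideanCLM (𝕜 := ℝ) B (EuclideanSpace.single j 1) =
      WithLp.toLp 2 (fun i => B i j) := by
    ext i
    simp [Matrix.mulVec_single]
  have hle := (Matrix.toEuclideanCLM (𝕜 := ℝ) B).le_opNorm (EuclideanSpace.single j 1)
  rw [hcol, PiLp.norm_single, norm_one, mul_one] at hle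
  simpa [sMax, EuclideanSpace.norm_sq_eq] using pow_le_pow_left₀ (norm_nonneg _) hle 2

theorem frobSq_le_mul_sMax_sq (B : Matrix (Fin d) (Fin d) ℝ) : frobSq B ≤ d * sMax B ^ 2 := by
  rw [frobSq, Finset.sum_comm]
  simpa using Finset.sum_le_sum fun j (_ : j ∈ Finset.univ) => sum_sq_col_le_sMax_sq B j

theorem neg_log_abs_det_le {B : Matrix (Fin d) (Fin d) ℝ} (hB : B.det ≠ 0) {b : ℝ}
    (hb : sMax B⁻¹ ≤ b) : -Real.log |B.det| ≤ d * Real.log b := by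
  have hinv : |B⁻¹.det| = |B.det|⁻¹ := by
    rw [Matrix.det_nonsing_inv, Ring.inverse_eq_inv', abs_inv]
  calc -Real.log |B.det| = Real.log |B⁻¹.det| := by rw [hinv, Real.log_inv]
    _ ≤ Real.log (b ^ d) := by
      refine Real.log_le_log (by simpa [hinv] using hB) ?_
      exact (abs_det_le_sMax_pow _).trans (pow_le_pow_left₀ (sMax_nonneg _) hb d)
    _ = d * Real.log b := Real.log_pow b d

theorem potential_le_of_sMax_le {J A : Matrix (Fin d) (Fin d) ℝ} (hdet : (J * A⁻¹).det ≠ 0)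
    {a b : ℝ} (ha : sMax (J * A⁻¹) ≤ a) (hb : sMax (J * A⁻¹)⁻¹ ≤ b) :
    potential J A ≤ d * (a ^ 2 + 2 * Real.log b) := by
  have hfrob : frobSq (J * A⁻¹) ≤ d * a ^ 2 :=
    (frobSq_le_mul_sMax_sq _).trans <| by gcongr; exact sMax_nonneg _
  have hlog := neg_log_abs_det_le hdet hb
  rw [potential]
  linarith

end SingularValues

/-- Initial potential bound: `Φ_J((1/r)·I) ≤ d (1 + 4 log (R/r))`. -/
theorem stmt10 (d : ℕ) (r R : ℝ) (hr : 0 < r) (hrR : r ≤ R)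
    (J : Matrix (Fin d) (Fin d) ℝ) (hJ : J.det ≠ 0)
    (hJ1 : R⁻¹ ≤ sMax J) (hJ2 : sMax J ≤ r⁻¹)
    (hJcond : sMax J / sMin J ≤ R / r) :
    potential J (r⁻¹ • (1 : Matrix (Fin d) (Fin d) ℝ)) ≤
      (d : ℝ) * (1 + 4 * Real.log (R / r)) := by
  have hR : 0 < R := hr.trans_le hrR
  have hB : J * (r⁻¹ • (1 : Matrix (Fin d) (Fin d) ℝ))⁻¹ = r • J := by
    rw [Matrix.inv_eq_left_inv (B := r • 1) (by simp [smul_smul, hr.ne']), Matrix.mul_smul,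
      mul_one]
  have hBinv : (r • J)⁻¹ = r⁻¹ • J⁻¹ :=
    Matrix.inv_eq_left_inv (by
      rw [Matrix.smul_mul, Matrix.mul_smul, smul_smul, inv_mul_cancel₀ hr.ne', one_smul,
        Matrix.nonsing_inv_mul _ (isUnit_iff_ne_zero.mpr hJ)])
  have hdet : (r • J).det ≠ 0 := by simp [hr.ne', hJ]
  have hmax : sMax (r • J) ≤ 1 := by
    rw [sMax_smul, abs_of_pos hr]
    exact (mul_le_mul_of_nonneg_left hJ2 hr.le).trans_eq (mul_inv_cancel₀ hr.ne')
  have hJinv : sMax J⁻¹ ≤ R * (R / r) := by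
    rw [sMax_div_sMin] at hJcond
    calc sMax J⁻¹ = R * (R⁻¹ * sMax J⁻¹) := by field_simp
      _ ≤ R * (sMax J * sMax J⁻¹) := by gcongr; exact sMax_nonneg _
      _ ≤ R * (R / r) := by gcongr
  have hmin : sMax (r • J)⁻¹ ≤ (R / r) ^ 2 := by
    rw [hBinv, sMax_smul, abs_of_pos (inv_pos.mpr hr)]
    calc r⁻¹ * sMax J⁻¹ ≤ r⁻¹ * (R * (R / r)) := by gcongr
      _ = (R / r) ^ 2 := by ring
  calc potential J (r⁻¹ • 1) ≤ d * (1 ^ 2 + 2 * Real.log ((R / r) ^ 2)) :=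
        potential_le_of_sMax_le (hB ▸ hdet) (hB ▸ hmax) (hB ▸ hmin)
    _ = d * (1 + 4 * Real.log (R / r)) := by rw [Real.log_pow]; push_cast; ring
end
end

section
/- Let d be such that there exists a Hadamard basis v_1, …, v_d of ℝ^d, let ε ∈ (0, d−1) and C > 0. For each i ∈ [d], define the ellipsoid 𝓔_i = {x ∈ ℝ^d : (d−ε)·x_i² + (ε/(d−1))·Σ_{j≠i} x_j² ≤ 1}. Suppose 𝓔̂ is an origin-centered ellipsoid such that v_i ∈ 𝓔̂ for all i ∈ [d] and 𝓔̂ ⊆ C·𝓔_i for all i ∈ [d]. Then C ≥ √(d−ε). -/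
noncomputable section

open scoped Pointwise

open scoped RealInnerProductSpace

/-! The sum `∑ⱼ ‖A vⱼ‖²` over an orthonormal basis is the squared Frobenius norm of `A`, whatever
the basis. Since every `vⱼ` lies in `𝓔̂ = {x : ‖A x‖ ≤ 1}`, this sum is at most `d`, so some
standard basis vector satisfies `‖A eᵢ‖ ≤ 1`. Then `eᵢ / ‖A eᵢ‖ ∈ 𝓔̂ ⊆ C • 𝓔ᵢ`, which forces
`(d - ε) ≤ (d - ε) / ‖A eᵢ‖² ≤ C²`. -/

open Finset

section

variable {d : ℕ}

theorem mulVecE_smul (A : Matrix (Fin d) (Fin d) ℝ) (c : ℝ) (x : EuclideanSpace ℝ (Fin d)) :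
    mulVecE A (c • x) = c • mulVecE A x := by
  simp only [mulVecE, WithLp.ofLp_smul, Matrix.mulVec_smul, WithLp.toLp_smul]

theorem mulVecE_ne_zero {A : Matrix (Fin d) (Fin d) ℝ} (hA : A.det ≠ 0)
    {x : EuclideanSpace ℝ (Fin d)} (hx : x ≠ 0) : mulVecE A x ≠ 0 := fun h =>
  hx <| by simpa using Matrix.eq_zero_of_mulVec_eq_zero hA (congrArg WithLp.ofLp h)

theorem norm_mulVecE_sq (A : Matrix (Fin d) (Fin d) ℝ) (x : EuclideanSpace ℝ (Fin d)) :
    ‖mulVecE A x‖ ^ 2 = ∑ k, ⟪WithLp.toLp 2 (A k), x⟫ ^ 2 := by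
  rw [EuclideanSpace.real_norm_sq_eq]
  congr! 2 with k
  simp [mulVecE, Matrix.mulVec, dotProduct, PiLp.inner_apply, mul_comm]

theorem sum_norm_mulVecE_sq {ι : Type*} [Fintype ι]
    (b : OrthonormalBasis ι ℝ (EuclideanSpace ℝ (Fin d))) (A : Matrix (Fin d) (Fin d) ℝ) :
    ∑ j, ‖mulVecE A (b j)‖ ^ 2 = frobSq A := by
  simp_rw [norm_mulVecE_sq]
  rw [Finset.sum_comm]
  simp_rw [b.sum_sq_inner_left, EuclideanSpace.real_norm_sq_eq]
  rfl

theorem exists_norm_mulVecE_single_le_one [NeZero d] {v : Fin d → EuclideanSpace ℝ (Fin d)}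
    (hv : Orthonormal ℝ v) {A : Matrix (Fin d) (Fin d) ℝ} (hAv : ∀ j, ‖mulVecE A (v j)‖ ≤ 1) :
    ∃ i, ‖mulVecE A (EuclideanSpace.single i 1)‖ ≤ 1 := by
  let b := OrthonormalBasis.mk hv
    (hv.linearIndependent.span_eq_top_of_card_eq_finrank' (by simp)).ge
  have hsum : ∑ i, ‖mulVecE A (EuclideanSpace.basisFun (Fin d) ℝ i)‖ ^ 2
      ≤ ∑ _i : Fin d, 1 ^ 2 := by
    calc _ = ∑ j, ‖mulVecE A (b j)‖ ^ 2 := by rw [sum_norm_mulVecE_sq, sum_norm_mulVecE_sq]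
      _ ≤ ∑ _j : Fin d, 1 ^ 2 := by
        gcongr with j
        simpa [b] using hAv j
  obtain ⟨i, -, hi⟩ := Finset.exists_le_of_sum_le univ_nonempty hsum
  exact ⟨i, by simpa using (pow_le_pow_iff_left₀ (norm_nonneg _) zero_le_one two_ne_zero).mp hi⟩

theorem inv_norm_smul_mem_Ellip (A : Matrix (Fin d) (Fin d) ℝ)
    (x : EuclideanSpace ℝ (Fin d)) : ‖mulVecE A x‖⁻¹ • x ∈ Ellip A := by
  simp only [Ellip, Set.mem_ofPred_eq, mulVecE_smul, norm_smul, norm_inv, norm_norm]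
  exact inv_mul_le_one

theorem sq_mul_le_of_smul_single_mem {a b c C : ℝ} (hC : 0 < C) (i : Fin d)
    (h : c • EuclideanSpace.single i 1 ∈
      C • {y : EuclideanSpace ℝ (Fin d) | a * y i ^ 2 + b * ∑ j ∈ univ.erase i, y j ^ 2 ≤ 1}) :
    a * c ^ 2 ≤ C ^ 2 := by
  rw [Set.mem_smul_set_iff_inv_smul_mem₀ hC.ne', Set.mem_ofPred_eq] at h
  have hzero : ∑ j ∈ univ.erase i, ((C⁻¹ • c • EuclideanSpace.single i (1 : ℝ)) j) ^ 2 = 0 :=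
    Finset.sum_eq_zero fun j hj => by simp [Finset.ne_of_mem_erase hj]
  rw [hzero] at h
  simp only [mul_zero, add_zero, PiLp.smul_apply, PiLp.single_apply, if_true, smul_eq_mul,
    mul_one] at h
  rwa [inv_mul_eq_div, div_pow, mul_div_assoc', div_le_one (by positivity)] at h

end

theorem stmt13_general (d : ℕ) (v : Fin d → EuclideanSpace ℝ (Fin d))
    (hvnorm : ∀ i, ‖v i‖ = 1)
    (hvorth : ∀ i j, i ≠ j → ⟪v i, v j⟫ = 0)
    (ε : ℝ) (hε0 : 0 < ε) (hε1 : ε < (d : ℝ) - 1)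
    (C : ℝ) (hC : 0 < C)
    (Ei : Fin d → Set (EuclideanSpace ℝ (Fin d)))
    (hEi : ∀ i, Ei i = {y : EuclideanSpace ℝ (Fin d) |
      ((d : ℝ) - ε) * y i ^ 2 + (ε / ((d : ℝ) - 1)) * ∑ j ∈ Finset.univ.erase i, y j ^ 2 ≤ 1})
    (Ehat : Set (EuclideanSpace ℝ (Fin d)))
    (A : Matrix (Fin d) (Fin d) ℝ) (hA : A.det ≠ 0) (hEhat : Ehat = Ellip A)
    (hmem : ∀ i, v i ∈ Ehat)
    (hsub : ∀ i, Ehat ⊆ C • Ei i) :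
    Real.sqrt ((d : ℝ) - ε) ≤ C := by
  have : NeZero d := ⟨by rintro rfl; norm_num at hε1; linarith⟩
  have hv : Orthonormal ℝ v := orthonormal_iff_ite.mpr fun i j => by
    split_ifs with h
    · rw [h, real_inner_self_eq_norm_sq, hvnorm, one_pow]
    · exact hvorth i j h
  obtain ⟨i, hi⟩ := exists_norm_mulVecE_single_le_one hv fun j => hEhat ▸ hmem j
  set e := EuclideanSpace.single i (1 : ℝ)
  have hpos : 0 < ‖mulVecE A e‖ := norm_pos_iff.mpr (mulVecE_ne_zero hA (by simp [e]))
  have he : ‖mulVecE A e‖⁻¹ • e ∈ C • Ei i := hsub i (hEhat ▸ inv_norm_smul_mem_Ellip A e)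
  rw [hEi i] at he
  rw [Real.sqrt_le_left hC.le]
  calc (d : ℝ) - ε ≤ ((d : ℝ) - ε) * ‖mulVecE A e‖⁻¹ ^ 2 :=
        le_mul_of_one_le_right (by linarith) (one_le_pow₀ ((one_le_inv₀ hpos).mpr hi))
    _ ≤ C ^ 2 := sq_mul_le_of_smul_single_mem hC i he

/-- Lower bound for monotonic streaming approximation of John's ellipsoid: if an
origin-centered ellipsoid `𝓔̂` contains a Hadamard basis `v₁, …, v_d` and is contained in
`C · 𝓔ᵢ` for every `i`, where
`𝓔ᵢ = {x : (d−ε)·xᵢ² + (ε/(d−1))·Σ_{j≠i} xⱼ² ≤ 1}`, then `C ≥ √(d−ε)`. -/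
theorem stmt13 (d : ℕ) (v : Fin d → EuclideanSpace ℝ (Fin d))
    (hvnorm : ∀ i, ‖v i‖ = 1)
    (hvorth : ∀ i j, i ≠ j → ⟪v i, v j⟫ = 0)
    (hvent : ∀ i j, v i j = 1 / Real.sqrt d ∨ v i j = -(1 / Real.sqrt d))
    (ε : ℝ) (hε0 : 0 < ε) (hε1 : ε < (d : ℝ) - 1)
    (C : ℝ) (hC : 0 < C)
    (Ei : Fin d → Set (EuclideanSpace ℝ (Fin d)))
    (hEi : ∀ i, Ei i = {y : EuclideanSpace ℝ (Fin d) |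
      ((d : ℝ) - ε) * y i ^ 2 + (ε / ((d : ℝ) - 1)) * ∑ j ∈ Finset.univ.erase i, y j ^ 2 ≤ 1})
    (Ehat : Set (EuclideanSpace ℝ (Fin d)))
    (A : Matrix (Fin d) (Fin d) ℝ) (hA : A.det ≠ 0) (hEhat : Ehat = Ellip A)
    (hmem : ∀ i, v i ∈ Ehat)
    (hsub : ∀ i, Ehat ⊆ C • Ei i) :
    Real.sqrt ((d : ℝ) - ε) ≤ C :=
  stmt13_general d v hvnorm hvorth ε hε0 hε1 C hC Ei hEi Ehat A hA hEhat hmem hsub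
end
end

section
/- Let d ≥ 1 and n ≥ 1 be integers and ξ ≥ 1. Let σ_{i,t} > 0 for i ∈ [d], t ∈ [n], and define S_t = Σ_{i=1}^d σ_{i,t}² and P_t = Σ_{i=1}^d log(σ_{i,t}²). Let Q_1 ≤ Q_2 ≤ … ≤ Q_n be a nondecreasing sequence with 0 < Q_t ≤ 1 for all t. Assume: (i) S_1 ≤ d; (ii) for all 1 ≤ u ≤ t ≤ n, S_t ≤ S_u + Q_t·(P_t − P_u); (iii) for all 2 ≤ t ≤ n, S_t ≤ S_{t−1} + d·Q_t; and (iv) σ_{i,t}² ≥ Q_t/ξ⁴ for all i ∈ [d], t ∈ [n]. Then S_n ≤ 6 + 28·d·log ξ + 16·d. -/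
/-!
Dividing by `d`, write `s_t = S_t / d` and `p_t = P_t / d`. Concavity of `log` gives
`p_t ≤ log s_t`, and (iv) gives `p_t ≥ log Q_t - 4 log ξ`. With `L = log ξ`, one shows by
induction on `t` that
`s_t - Q_t p_t ≤ 1 + (10 L + 8) Q_t - 3 Q_t log Q_t`.
If `Q_{t+1} ≤ 2 Q_t`, this follows from (ii) with `u = t`, because `Q_t log Q_t` changes by
`O(Q_{t+1} - Q_t)`. If `Q_{t+1} > 2 Q_t`, then `p_t ≤ log s_t ≤ s_t / 4 + log 4 - 1` turns the
invariant at `t` into an absolute bound on `s_t`, and (iii) closes the step. The same absolute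
bound at `t = n` gives `s_n ≤ 14 L + 13`.
-/

noncomputable section

open scoped Pointwise

open Real

lemma log_le_div_add_log_sub_one {a x : ℝ} (ha : 0 < a) (hx : 0 < x) :
    log x ≤ x / a + log a - 1 := by
  have h := log_le_sub_one_of_pos (div_pos hx ha)
  rw [log_div hx.ne' ha.ne'] at h
  linarith

lemma mul_log_sub_log_le {p q : ℝ} (hp : 0 < p) (hq : 0 < q) :
    p * (log q - log p) ≤ q - p := by
  have h := mul_le_mul_of_nonneg_left (log_le_sub_one_of_pos (div_pos hq hp)) hp.le
  rwa [log_div hq.ne' hp.ne', mul_sub p (q / p), mul_div_cancel₀ _ hp.ne', mul_one] at h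

lemma sub_one_le_mul_log {q : ℝ} (hq : 0 < q) : q - 1 ≤ q * log q := by
  have h := mul_le_mul_of_nonneg_left (one_sub_inv_le_log_of_pos hq) hq.le
  rwa [mul_sub, mul_inv_cancel₀ hq.ne', mul_one] at h

lemma log_four_sub_one_lt : log 4 - 1 < 0.39 := by
  have h4 : log 4 = 2 * log 2 := by
    rw [show (4 : ℝ) = 2 ^ 2 by norm_num, log_pow]
    norm_num
  linarith [log_two_lt_d9]

lemma sum_log_div_card_le_log_sum_div_card {ι : Type*} [Fintype ι] [Nonempty ι]
    {x : ι → ℝ} (hx : ∀ i, 0 < x i) :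
    (∑ i, log (x i)) / Fintype.card ι ≤ log ((∑ i, x i) / Fintype.card ι) := by
  have hcard : (0 : ℝ) < Fintype.card ι := by exact_mod_cast Fintype.card_pos
  have h := strictConcaveOn_log_Ioi.concaveOn.le_map_sum (t := Finset.univ)
    (w := fun _ => (Fintype.card ι : ℝ)⁻¹) (p := x) (fun _ _ => by positivity)
    (by simp [Finset.card_univ, hcard.ne']) (fun i _ => hx i)
  simp only [smul_eq_mul, ← Finset.mul_sum] at h
  rwa [inv_mul_eq_div, inv_mul_eq_div] at h

lemma le_sum_div_card {ι : Type*} [Fintype ι] [Nonempty ι] {a : ℝ} {x : ι → ℝ}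
    (hx : ∀ i, a ≤ x i) : a ≤ (∑ i, x i) / Fintype.card ι := by
  rw [le_div_iff₀ (by exact_mod_cast Fintype.card_pos), mul_comm, ← nsmul_eq_mul]
  exact Finset.card_nsmul_le_sum _ _ _ fun i _ => hx i

def invariantBound (L q : ℝ) : ℝ :=
  1 + (10 * L + 8) * q - 3 * (q * log q)

lemma one_add_mul_le_invariantBound {L q : ℝ} (hL : 0 ≤ L) (hq : 0 < q) (hq1 : q ≤ 1) :
    1 + q * (4 * L - log q) ≤ invariantBound L q := by
  have : 0 ≤ q * (6 * L + 8 - 2 * log q) :=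
    mul_nonneg hq.le (by linarith [log_nonpos hq.le hq1])
  unfold invariantBound
  linarith

lemma invariantBound_add_le {L v q : ℝ} (hL : 0 ≤ L) (hv : 0 < v) (hvq : v ≤ q)
    (hqv : q ≤ 2 * v) (hq1 : q ≤ 1) :
    invariantBound L v + (q - v) * (4 * L - log v) ≤ invariantBound L q := by
  have hratio : 0 ≤ log q - log v := sub_nonneg.2 (log_le_log hv hvq)
  have hgrowth : q * (log q - log v) ≤ 2 * (q - v) := calc
    q * (log q - log v) ≤ 2 * v * (log q - log v) := mul_le_mul_of_nonneg_right hqv hratio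
    _ ≤ 2 * (q - v) := by
      rw [mul_assoc]
      exact mul_le_mul_of_nonneg_left (mul_log_sub_log_le hv (hv.trans_le hvq)) zero_le_two
  have h1 : 0 ≤ (q - v) * L := mul_nonneg (sub_nonneg.2 hvq) hL
  have h2 : (q - v) * log v ≤ 0 :=
    mul_nonpos_of_nonneg_of_nonpos (sub_nonneg.2 hvq) (log_nonpos hv.le (hvq.trans hq1))
  unfold invariantBound
  linarith

lemma mul_one_sub_div_four_le {L s q r : ℝ} (hs : 0 < s) (hq : 0 ≤ q)
    (hinv : s - q * r ≤ invariantBound L q) (hr : r ≤ log s) :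
    s * (1 - q / 4) ≤ invariantBound L q + q * (log 4 - 1) := by
  have h := mul_le_mul_of_nonneg_left (hr.trans (log_le_div_add_log_sub_one four_pos hs)) hq
  linarith

lemma invariantBound_add_le_of_two_mul_le {L p q : ℝ} (hL : 0 ≤ L) (hp : 0 < p)
    (hpq : 2 * p ≤ q) (hq1 : q ≤ 1) :
    invariantBound L p + p * (log 4 - 1) ≤
      (1 - p / 4) * (1 + (6 * L + 7) * q - 2 * (q * log q)) := by
  have hq : 0 < q := by linarith
  have hlogq : log q ≤ 0 := log_nonpos hq.le hq1
  have hpq' : p * (log q - log p) ≤ q - p := mul_log_sub_log_le hp hq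
  have hR : 1 + (6 * L + 7) * q - 2 * (q * log q) ≤ 8 + 6 * L := by
    linarith [sub_one_le_mul_log hq, mul_le_of_le_one_right hL hq1]
  have h1 := mul_le_mul_of_nonneg_left hR hp.le
  have h2 : 0 ≤ (q - 2 * p) * -log q := mul_nonneg (by linarith) (by linarith)
  have h3 : 0 ≤ L * (q - 2 * p) := mul_nonneg hL (by linarith)
  have h4 : q * log q ≤ 0 := mul_nonpos_of_nonneg_of_nonpos hq.le hlogq
  have h5 : p * (log 4 - 1) ≤ p * 0.39 := mul_le_mul_of_nonneg_left log_four_sub_one_lt.le hp.le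
  unfold invariantBound
  nlinarith

lemma le_of_mul_one_sub_div_four_le {L s q : ℝ} (hL : 0 ≤ L) (hs : 0 < s) (hq : 0 < q)
    (hq1 : q ≤ 1) (h : s * (1 - q / 4) ≤ invariantBound L q + q * (log 4 - 1)) :
    s ≤ 14 * L + 13 := by
  have h1 : s * (3 / 4) ≤ s * (1 - q / 4) := by gcongr; linarith
  have h2 : q * (log 4 - 1) ≤ 0.39 := by nlinarith [log_four_sub_one_lt]
  have h3 : L * q ≤ L := mul_le_of_le_one_right hL hq1
  have h4 := sub_one_le_mul_log hq
  unfold invariantBound at h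
  linarith

/-- Hypotheses (i)–(iii) and the two bounds on `p`, for `s = S / d`, `p = P / d`, `L = log ξ`. -/
structure NormalizedInvariants (L : ℝ) (n : ℕ) (s p Q : ℕ → ℝ) : Prop where
  Q_le_succ : ∀ t, 1 ≤ t → t < n → Q t ≤ Q (t + 1)
  Q_pos : ∀ t, 1 ≤ t → t ≤ n → 0 < Q t
  Q_le_one : ∀ t, 1 ≤ t → t ≤ n → Q t ≤ 1
  s_pos : ∀ t, 1 ≤ t → t ≤ n → 0 < s t
  log_Q_sub_le : ∀ t, 1 ≤ t → t ≤ n → log (Q t) - 4 * L ≤ p t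
  le_log_s : ∀ t, 1 ≤ t → t ≤ n → p t ≤ log (s t)
  s_one_le : s 1 ≤ 1
  s_succ_le_add_mul : ∀ t, 1 ≤ t → t < n → s (t + 1) ≤ s t + Q (t + 1) * (p (t + 1) - p t)
  s_succ_le_add : ∀ t, 1 ≤ t → t < n → s (t + 1) ≤ s t + Q (t + 1)

namespace NormalizedInvariants

variable {L : ℝ} {n : ℕ} {s p Q : ℕ → ℝ}

theorem sub_mul_le_invariantBound (h : NormalizedInvariants L n s p Q) (hL : 0 ≤ L) :
    ∀ t, 1 ≤ t → t ≤ n → s t - Q t * p t ≤ invariantBound L (Q t) := by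
  intro t ht
  induction t, ht using Nat.le_induction with
  | base =>
    intro h1n
    have hQ := h.Q_pos 1 le_rfl h1n
    have hp := mul_le_mul_of_nonneg_left (h.log_Q_sub_le 1 le_rfl h1n) hQ.le
    linarith [h.s_one_le, one_add_mul_le_invariantBound hL hQ (h.Q_le_one 1 le_rfl h1n)]
  | succ t ht ih =>
    intro htn
    have htn' : t ≤ n := by omega
    have ih := ih htn'
    have hv := h.Q_pos t ht htn'
    have hq := h.Q_pos (t + 1) (by omega) htn
    have hq1 := h.Q_le_one (t + 1) (by omega) htn
    have hvq := h.Q_le_succ t ht htn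
    by_cases hclose : Q (t + 1) ≤ 2 * Q t
    · have hp := mul_le_mul_of_nonneg_left (h.log_Q_sub_le t ht htn') (sub_nonneg.2 hvq)
      linarith [h.s_succ_le_add_mul t ht htn, invariantBound_add_le hL hv hvq hclose hq1]
    · have hs_t : s t ≤ 1 + (6 * L + 7) * Q (t + 1) - 2 * (Q (t + 1) * log (Q (t + 1))) := by
        refine le_of_mul_le_mul_left ?_ (by linarith [h.Q_le_one t ht htn'] : 0 < 1 - Q t / 4)
        rw [mul_comm _ (s t)]
        exact (mul_one_sub_div_four_le (h.s_pos t ht htn') hv.le ih (h.le_log_s t ht htn')).trans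
          (invariantBound_add_le_of_two_mul_le hL hv (by linarith) hq1)
      have hp := mul_le_mul_of_nonneg_left (h.log_Q_sub_le (t + 1) (by omega) htn) hq.le
      unfold invariantBound
      linarith [h.s_succ_le_add t ht htn]

theorem s_le (h : NormalizedInvariants L n s p Q) (hL : 0 ≤ L) (hn : 1 ≤ n) :
    s n ≤ 14 * L + 13 :=
  le_of_mul_one_sub_div_four_le hL (h.s_pos n hn le_rfl) (h.Q_pos n hn le_rfl)
    (h.Q_le_one n hn le_rfl) <|
    mul_one_sub_div_four_le (h.s_pos n hn le_rfl) (h.Q_pos n hn le_rfl).le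
      (h.sub_mul_le_invariantBound hL n hn le_rfl) (h.le_log_s n hn le_rfl)

end NormalizedInvariants

/-- The final potential-sum bound: under the invariants of the scale-independent algorithm,
`S_n ≤ 6 + 28·d·log ξ + 16·d`. -/
theorem stmt17 (d n : ℕ) (hd : 1 ≤ d) (hn : 1 ≤ n) (ξ : ℝ) (hξ : 1 ≤ ξ)
    (σ : Fin d → ℕ → ℝ) (hσ : ∀ i, ∀ t, 1 ≤ t → t ≤ n → 0 < σ i t)
    (S P : ℕ → ℝ)
    (hS : ∀ t, S t = ∑ i, σ i t ^ 2)
    (hP : ∀ t, P t = ∑ i, Real.log (σ i t ^ 2))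
    (Q : ℕ → ℝ)
    (hQmono : ∀ u t, 1 ≤ u → u ≤ t → t ≤ n → Q u ≤ Q t)
    (hQpos : ∀ t, 1 ≤ t → t ≤ n → 0 < Q t)
    (hQle : ∀ t, 1 ≤ t → t ≤ n → Q t ≤ 1)
    (hi : S 1 ≤ d)
    (hii : ∀ u t, 1 ≤ u → u ≤ t → t ≤ n → S t ≤ S u + Q t * (P t - P u))
    (hiii : ∀ t, 2 ≤ t → t ≤ n → S t ≤ S (t - 1) + d * Q t)
    (hiv : ∀ i, ∀ t, 1 ≤ t → t ≤ n → Q t / ξ ^ 4 ≤ σ i t ^ 2) :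
    S n ≤ 6 + 28 * d * Real.log ξ + 16 * d := by
  have : Nonempty (Fin d) := ⟨⟨0, hd⟩⟩
  have hd' : (0 : ℝ) < d := by exact_mod_cast hd
  have hL : 0 ≤ log ξ := log_nonneg hξ
  have hlog_σ : ∀ i t, 1 ≤ t → t ≤ n → log (Q t) - 4 * log ξ ≤ log (σ i t ^ 2) := by
    intro i t h1 h2
    have h := log_le_log (by positivity [hQpos t h1 h2]) (hiv i t h1 h2)
    rwa [log_div (hQpos t h1 h2).ne' (by positivity), log_pow, Nat.cast_ofNat] at h
  have hnorm : NormalizedInvariants (log ξ) n (fun t => S t / d) (fun t => P t / d) Q :=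
    { Q_le_succ := fun t h1 h2 => hQmono t (t + 1) h1 (by omega) h2
      Q_pos := hQpos
      Q_le_one := hQle
      s_pos := fun t h1 h2 => by
        rw [hS]
        exact div_pos (Finset.sum_pos (fun i _ => pow_pos (hσ i t h1 h2) 2) Finset.univ_nonempty) hd'
      log_Q_sub_le := fun t h1 h2 => by
        simpa only [hP, Fintype.card_fin] using le_sum_div_card (hlog_σ · t h1 h2)
      le_log_s := fun t h1 h2 => by
        simpa only [hS, hP, Fintype.card_fin] using
          sum_log_div_card_le_log_sum_div_card (fun i => pow_pos (hσ i t h1 h2) 2)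
      s_one_le := (div_le_one hd').2 hi
      s_succ_le_add_mul := fun t h1 h2 =>
        (div_le_div_of_nonneg_right (hii t (t + 1) h1 (by omega) h2) hd'.le).trans_eq (by ring)
      s_succ_le_add := fun t h1 h2 =>
        (div_le_div_of_nonneg_right (hiii (t + 1) (by omega) h2) hd'.le).trans_eq
          (by simp only [Nat.add_sub_cancel]; field_simp) }
  calc S n = d * (S n / d) := by field_simp
    _ ≤ d * (14 * log ξ + 13) := by gcongr; exact hnorm.s_le hL hn
    _ ≤ 6 + 28 * d * log ξ + 16 * d := by nlinarith [mul_nonneg hd'.le hL]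
end
end

section
/- Let A = U·Σ^{-1}·V^T ∈ ℝ^{d×d}, where U and V are orthogonal matrices and Σ is a diagonal matrix with positive diagonal entries. Fix i ∈ [d], let w_i be the i-th column of V, and let z = τ·w_i for some τ > Σ_{ii} (so that ‖A z‖ = τ/Σ_{ii} > 1). Let Â be the update matrix for (A, z). Then Â·A = U·(Σ')^{-1}·V^T, where Σ' is the diagonal matrix with Σ'_{ii} = τ and Σ'_{jj} = Σ_{jj} for all j ≠ i. -/
noncomputable section

open scoped Pointwise

/-!
Write `uᵢ`, `wᵢ` for the `i`-th columns of `U`, `V` and `r = τ / σᵢ`. Since `Vᵀ wᵢ = eᵢ`, we get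
`A z = r uᵢ` with `‖uᵢ‖ = 1`, so the update is the rank-one correction
`Â = 1 - (1 - r⁻¹) uᵢ uᵢᵀ`. As `Uᵀ uᵢ = eᵢ`, this gives `Â U = U D`, where `D` is the identity
except that `Dᵢᵢ = r⁻¹ = σᵢ / τ`. So `Â A = U D Σ⁻¹ Vᵀ`, and `D Σ⁻¹` changes only the
`i`-th diagonal entry, from `1 / σᵢ` to `1 / τ`.
-/

open Matrix

section SingularVectors

variable {n K : Type*} [Fintype n] [DecidableEq n] [Field K]

theorem inv_diagonal_of_ne_zero {v : n → K} (hv : ∀ j, v j ≠ 0) :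
    (diagonal v)⁻¹ = diagonal v⁻¹ :=
  inv_eq_left_inv <| by
    rw [diagonal_mul_diagonal, ← diagonal_one]
    exact congrArg diagonal (funext fun j => inv_mul_cancel₀ (hv j))

theorem col_vecMul_of_transpose_mul_self {U : Matrix n n K} (hU : Uᵀ * U = 1) (i : n) :
    U.col i ᵥ* U = Pi.single i 1 := by
  rw [← transpose_transpose U, vecMul_transpose, transpose_transpose, ← mulVec_single_one,
    mulVec_mulVec, hU, one_mulVec]

theorem mul_diagonal_mul_transpose_mulVec_col {U V : Matrix n n K} (hV : Vᵀ * V = 1)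
    (s : n → K) (i : n) : (U * diagonal s * Vᵀ) *ᵥ V.col i = s i • U.col i := by
  rw [← mulVec_single_one V, mulVec_mulVec, Matrix.mul_assoc, hV, Matrix.mul_one,
    ← mulVec_mulVec, mulVec_single_one]
  ext j
  simp [mul_comm]

theorem one_sub_smul_vecMulVec_col_mul {U : Matrix n n K} (hU : Uᵀ * U = 1) (c : K) (i : n) :
    (1 - c • vecMulVec (U.col i) (U.col i)) * U = U * diagonal (Function.update 1 i (1 - c)) := by
  rw [Matrix.sub_mul, Matrix.smul_mul, vecMulVec_mul, col_vecMul_of_transpose_mul_self hU,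
    Matrix.one_mul]
  ext a b
  rcases eq_or_ne b i with rfl | h
  · simp [vecMulVec_apply, mul_sub, mul_comm]
  · simp [vecMulVec_apply, h]

theorem diagonal_update_one_mul_diagonal_inv {σ : n → K} {i : n} (hσi : σ i ≠ 0) (τ : K) :
    diagonal (Function.update 1 i (σ i / τ)) * diagonal σ⁻¹ =
      diagonal (Function.update σ i τ)⁻¹ := by
  rw [diagonal_mul_diagonal]
  congr 1
  funext j
  rcases eq_or_ne j i with rfl | h
  · simp only [Function.update_self, Pi.inv_apply]
    field_simp
  · simp [h]

end SingularVectors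

theorem norm_toLp_col_eq_one {n : Type*} [Fintype n] [DecidableEq n] {U : Matrix n n ℝ}
    (hU : Uᵀ * U = 1) (i : n) : ‖(WithLp.toLp 2 (U.col i) : EuclideanSpace ℝ n)‖ = 1 := by
  have h : ∑ j, U j i ^ 2 = 1 := by
    simpa [mul_apply, sq] using congrFun (congrFun hU i) i
  simpa [EuclideanSpace.norm_eq] using h

theorem updateMatrix_eq_of_mulVecE_eq_smul {d : ℕ} {A : Matrix (Fin d) (Fin d) ℝ}
    {x u : EuclideanSpace ℝ (Fin d)} {r : ℝ} (hu : ‖u‖ = 1) (hr : 0 < r)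
    (hAx : mulVecE A x = r • u) :
    updateMatrix A x = 1 - (1 - r⁻¹) • vecMulVec u u := by
  rw [updateMatrix, hAx, norm_smul, hu, mul_one, Real.norm_of_nonneg hr.le, WithLp.ofLp_smul,
    smul_vecMulVec, vecMulVec_smul, smul_smul, smul_smul]
  congr 2
  field_simp

open Matrix in
theorem stmt18_general (d : ℕ) (U V : Matrix (Fin d) (Fin d) ℝ)
    (hU : Uᵀ * U = 1) (hV : Vᵀ * V = 1)
    (σ : Fin d → ℝ) (hσ : ∀ j, 0 < σ j)
    (A : Matrix (Fin d) (Fin d) ℝ)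
    (hA : A = U * (Matrix.diagonal σ)⁻¹ * Vᵀ)
    (i : Fin d) (τ : ℝ) (hτ : σ i < τ)
    (z : EuclideanSpace ℝ (Fin d)) (hz : z = τ • (WithLp.toLp 2 (fun j => V j i) : EuclideanSpace ℝ (Fin d))) :
    updateMatrix A z * A = U * (Matrix.diagonal (Function.update σ i τ))⁻¹ * Vᵀ := by
  have hσ0 : ∀ j, σ j ≠ 0 := fun j => (hσ j).ne'
  have hτ0 : 0 < τ := (hσ i).trans hτ
  have hAz : mulVecE A z = (τ / σ i) • WithLp.toLp 2 (U.col i) := by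
    rw [mulVecE, show z = τ • WithLp.toLp 2 (V.col i) from hz, hA, inv_diagonal_of_ne_zero hσ0,
      WithLp.ofLp_smul, WithLp.ofLp_toLp, mulVec_smul, mul_diagonal_mul_transpose_mulVec_col hV,
      smul_smul, WithLp.toLp_smul, Pi.inv_apply, div_eq_mul_inv]
  have hσ0' : ∀ j, Function.update σ i τ j ≠ 0 := by
    intro j
    rcases eq_or_ne j i with rfl | h
    · simpa using hτ0.ne'
    · simpa [h] using hσ0 j
  rw [updateMatrix_eq_of_mulVecE_eq_smul (norm_toLp_col_eq_one hU i) (div_pos hτ0 (hσ i)) hAz,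
    WithLp.ofLp_toLp, hA, ← Matrix.mul_assoc, ← Matrix.mul_assoc,
    one_sub_smul_vecMulVec_col_mul hU, sub_sub_cancel, inv_div, Matrix.mul_assoc U,
    inv_diagonal_of_ne_zero hσ0, inv_diagonal_of_ne_zero hσ0',
    diagonal_update_one_mul_diagonal_inv (hσ0 i)]

open Matrix in
/-- Effect of the update along a singular direction: if `A = U Σ⁻¹ Vᵀ` in SVD form and
`z = τ · wᵢ` where `wᵢ` is the `i`-th column of `V` and `τ > Σᵢᵢ`, then
`Â·A = U (Σ')⁻¹ Vᵀ`, where `Σ'` agrees with `Σ` except that `Σ'ᵢᵢ = τ`. -/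
theorem stmt18 (d : ℕ) (U V : Matrix (Fin d) (Fin d) ℝ)
    (hU : Uᵀ * U = 1) (hU' : U * Uᵀ = 1) (hV : Vᵀ * V = 1) (hV' : V * Vᵀ = 1)
    (σ : Fin d → ℝ) (hσ : ∀ j, 0 < σ j)
    (A : Matrix (Fin d) (Fin d) ℝ)
    (hA : A = U * (Matrix.diagonal σ)⁻¹ * Vᵀ)
    (i : Fin d) (τ : ℝ) (hτ : σ i < τ)
    (z : EuclideanSpace ℝ (Fin d)) (hz : z = τ • (WithLp.toLp 2 (fun j => V j i) : EuclideanSpace ℝ (Fin d))) :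
    updateMatrix A z * A = U * (Matrix.diagonal (Function.update σ i τ))⁻¹ * Vᵀ :=
  stmt18_general d U V hU hV σ hσ A hA i τ hτ z hz
end
end
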